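/- arXiv:1301.4972 — 2 statements merged into one kernel-verified Lean document; each statement's English description precedes it below -/
import Mathlib

section
/- Let f : A* → A* be a morphism and suppose x = f^ω(a) is a pure morphic word generated by f. If z is an infinite word in the shift orbit closure of x all of whose letters are bounded under f, then z is ultimately periodic. -/
/-- The prefix of length `n` of an infinite word. -/
def wordPrefix {A : Type*} (x : ℕ → A) (n : ℕ) : List A :=
  List.ofFn (fun i : Fin n => x i)

/-- A finite word is a prefix of an infinite word. -/
def IsPrefixOfWord {A : Type*} (w : List A) (x : ℕ → A) : Prop :=
  wordPrefix x w.length = w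

/-- A finite word is a factor of an infinite word. -/
def IsFactor {A : Type*} (w : List A) (x : ℕ → A) : Prop :=
  ∃ i, w = List.ofFn (fun j : Fin w.length => x (i + j))

/-- `y` belongs to the shift orbit closure of `x`. -/
def InOrbitClosure {A : Type*} (y x : ℕ → A) : Prop :=
  ∀ w, IsFactor w y → IsFactor w x

/-- A morphism `A* → B*` applied to a finite word. -/
def applyMorphism {A B : Type*} (f : A → List B) (w : List A) : List B :=
  w.flatMap f

/-- The `n`-th iterate of a morphism applied to a finite word. -/
def applyIter {A : Type*} (f : A → List A) (n : ℕ) (w : List A) : List A :=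
  (applyMorphism f)^[n] w

/-- `y = f(x)` for infinite words: every image of a prefix of `x` is a prefix of `y`. -/
def IsWordImage {A B : Type*} (f : A → List B) (x : ℕ → A) (y : ℕ → B) : Prop :=
  ∀ n, IsPrefixOfWord (applyMorphism f (wordPrefix x n)) y

/-- Prepend a finite word to an infinite word. -/
def prepend {A : Type*} (w : List A) (x : ℕ → A) : ℕ → A :=
  fun n => if h : n < w.length then w.get ⟨n, h⟩ else x (n - w.length)

/-- Strict lexicographic order on infinite words induced by the order `r` on letters. -/
def LexLt {A : Type*} (r : A → A → Prop) (x y : ℕ → A) : Prop :=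
  ∃ n, (∀ i, i < n → x i = y i) ∧ r (x n) (y n)

def LexLe {A : Type*} (r : A → A → Prop) (x y : ℕ → A) : Prop :=
  LexLt r x y ∨ x = y

/-- `l` is the lexicographically least word (w.r.t. `r`) in the shift orbit closure
of `x` beginning with the letter `a`. -/
def IsLeastWord {A : Type*} (r : A → A → Prop) (x : ℕ → A) (a : A) (l : ℕ → A) : Prop :=
  InOrbitClosure l x ∧ l 0 = a ∧ ∀ y, InOrbitClosure y x → y 0 = a → LexLe r l y

/-- `f` is prolongable on `a` (and generates an infinite word from `a`). -/
def IsGenerating {A : Type*} (f : A → List A) (a : A) : Prop :=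
  ∃ s, f a = a :: s ∧ s ≠ [] ∧ ∀ n, applyIter f n s ≠ []

/-- `x` is the pure morphic word `f^ω(a)`. -/
def IsPureMorphic {A : Type*} (f : A → List A) (a : A) (x : ℕ → A) : Prop :=
  x 0 = a ∧ IsGenerating f a ∧ IsWordImage f x x

/-- `x` is a morphic word: the image under a coding of a pure morphic word. -/
def IsMorphic {B : Type*} (x : ℕ → B) : Prop :=
  ∃ (k : ℕ) (g : Fin k → List (Fin k)) (b : Fin k) (c : Fin k → B) (t : ℕ → Fin k),
    IsPureMorphic g b t ∧ x = c ∘ t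

/-- `f ∈ M_x`: each letter `b` has a nonempty "marker" word `p b` such that `f(y)`
begins with `p b` whenever `y ∈ S_x` begins with `b`, and the markers of distinct
letters are prefix-incomparable. -/
def MemM {A B : Type*} (f : A → List B) (x : ℕ → A) : Prop :=
  ∃ p : A → List B, (∀ b, p b ≠ []) ∧
    (∀ (b : A) (y : ℕ → A), InOrbitClosure y x → y 0 = b →
      ∃ n, p b <+: applyMorphism f (wordPrefix y n)) ∧
    (∀ a b : A, a ≠ b → ¬ p a <+: p b ∧ ¬ p b <+: p a)

/-- Every factor occurs infinitely often. -/
def Recurrent {A : Type*} (x : ℕ → A) : Prop :=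
  ∀ w, IsFactor w x → ∀ N, ∃ i, N ≤ i ∧ w = List.ofFn (fun j : Fin w.length => x (i + j))

/-- Ultimately periodic infinite word. -/
def UltimatelyPeriodic {A : Type*} (x : ℕ → A) : Prop :=
  ∃ N p, 0 < p ∧ ∀ n, N ≤ n → x (n + p) = x n

/-- The period-doubling morphism `0 ↦ 01`, `1 ↦ 00`. -/
def pdMorph : Bool → List Bool := fun b => if b then [false, false] else [false, true]

/-- The morphism `0 ↦ 0001`, `1 ↦ 0101`. -/
def gMorph : Bool → List Bool :=
  fun b => if b then [false, true, false, true] else [false, false, false, true]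

/-- The Chacon morphism `0 ↦ 0010`, `1 ↦ 1`. -/
def chMorph : Bool → List Bool := fun b => if b then [true] else [false, false, true, false]

/-- The Rudin–Shapiro morphism `0 ↦ 01`, `1 ↦ 02`, `2 ↦ 31`, `3 ↦ 32`. -/
def rsMorph : Fin 4 → List (Fin 4) := ![[0, 1], [0, 2], [3, 1], [3, 2]]

/-- The Rudin–Shapiro coding `0 ↦ 0`, `1 ↦ 0`, `2 ↦ 1`, `3 ↦ 1`. -/
def rsCoding : Fin 4 → Bool := ![false, false, true, true]

/-- The 2-bit binary representation morphism `0 ↦ 00`, `1 ↦ 01`, `2 ↦ 10`, `3 ↦ 11`. -/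
def hMorph : Fin 4 → List Bool := ![[false, false], [false, true], [true, false], [true, true]]

/-!
Split the alphabet into bounded and unbounded letters. For an unbounded letter `d` write
`f(d) = L(d) μ(d) R(d)` with `L(d)` bounded and `μ(d)` the first unbounded letter of `f(d)`. The
bounded prefix of `f^m(d)` in front of its first unbounded letter is then
`f^(m-1)(L d) f^(m-2)(L (μ d)) ⋯ L(μ^(m-1) d)`. Both `μ` and the iterates of `f` on bounded
letters are eventually periodic (they live in finite sets), so this prefix is `H V^k T` with
`|H|, |V|, |T|` bounded independently of `m` and `d`; by reversal the same holds for bounded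
suffixes. Peeling off one application of `f` at a time, a bounded factor of `f^m(c)` is a factor
of `(bounded suffix of f^j(d)) f^j(v) (bounded prefix of f^j(d'))` with `d`, `d'` unbounded and
`v` a short bounded word. Hence every prefix of `z` is a factor of some `H V^k W V'^l T` whose
five words are taken from a finite set; one choice of them serves infinitely many prefixes, and
this forces `z` to be ultimately periodic.
-/

open Filter

section

variable {A : Type*}

section InfiniteWords

def wordDrop (c : ℕ) (z : ℕ → A) : ℕ → A := fun n => z (n + c)

theorem length_wordPrefix (x : ℕ → A) (n : ℕ) : (wordPrefix x n).length = n := by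
  simp [wordPrefix]

theorem wordPrefix_add (x : ℕ → A) (m n : ℕ) :
    wordPrefix x (m + n) = wordPrefix x m ++ wordPrefix (wordDrop m x) n := by
  simp [wordPrefix, List.ofFn_add, wordDrop, Nat.add_comm]

theorem eq_wordPrefix_of_prefix {u : List A} {x : ℕ → A} {L : ℕ} (h : u <+: wordPrefix x L) :
    u = wordPrefix x u.length := by
  have hL : u.length ≤ L := by simpa [length_wordPrefix] using h.length_le
  have hx : wordPrefix x u.length <+: wordPrefix x L := by
    rw [show L = u.length + (L - u.length) by omega, wordPrefix_add]
    exact List.prefix_append _ _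
  exact (List.prefix_of_prefix_length_le h hx (by simp [length_wordPrefix])).eq_of_length
    (by simp [length_wordPrefix])

theorem UltimatelyPeriodic.of_wordDrop {z : ℕ → A} {c : ℕ}
    (h : UltimatelyPeriodic (wordDrop c z)) : UltimatelyPeriodic z := by
  obtain ⟨N, p, hp, hper⟩ := h
  refine ⟨N + c, p, hp, fun n hn => ?_⟩
  simpa [wordDrop, show n - c + p + c = n + p by omega, show n - c + c = n by omega]
    using hper (n - c) (by omega)

end InfiniteWords

section Powers

def wordPow (w : List A) (k : ℕ) : List A := (List.replicate k w).flatten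

theorem length_wordPow (w : List A) (k : ℕ) : (wordPow w k).length = k * w.length := by
  simp [wordPow]

theorem wordPow_zero (w : List A) : wordPow w 0 = [] := rfl

theorem wordPow_succ (w : List A) (k : ℕ) : wordPow w (k + 1) = w ++ wordPow w k := by
  simp [wordPow, List.replicate_succ]

theorem wordPow_succ' (w : List A) (k : ℕ) : wordPow w (k + 1) = wordPow w k ++ w := by
  simp [wordPow, List.replicate_succ']

theorem wordPow_add (w : List A) (k l : ℕ) : wordPow w (k + l) = wordPow w k ++ wordPow w l := by
  rw [wordPow, wordPow, wordPow, List.replicate_add, List.flatten_append]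

theorem reverse_wordPow (w : List A) (k : ℕ) : (wordPow w k).reverse = wordPow w.reverse k := by
  simp [wordPow, List.reverse_flatten, List.map_replicate]

theorem getElem?_wordPow_add_length (w : List A) {k i : ℕ}
    (h : i + w.length < (wordPow w k).length) :
    (wordPow w k)[i + w.length]? = (wordPow w k)[i]? := by
  obtain _ | k := k
  · simp [wordPow_zero] at h
  have hi : i < (wordPow w k).length := by simp [length_wordPow] at h ⊢; nlinarith
  conv_lhs => rw [wordPow_succ, List.getElem?_append_right (by omega), Nat.add_sub_cancel]
  rw [wordPow_succ', List.getElem?_append_left hi]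

theorem drop_wordPow {w : List A} {k s : ℕ} (h : s < (wordPow w k).length) :
    ∃ t < w.length, ∃ k', (wordPow w k).drop s = w.drop t ++ wordPow w k' := by
  rw [length_wordPow] at h
  have hw : 0 < w.length := Nat.pos_of_ne_zero fun h0 => by simp [h0] at h
  obtain ⟨q, t, ht, rfl⟩ : ∃ q t, t < w.length ∧ s = (wordPow w q).length + t :=
    ⟨s / w.length, s % w.length, Nat.mod_lt _ hw, by
      rw [length_wordPow, Nat.mul_comm, Nat.div_add_mod]⟩
  rw [length_wordPow] at h
  have hq : q < k := by nlinarith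
  have hk : wordPow w k = wordPow w q ++ (w ++ wordPow w (k - q - 1)) := by
    rw [← wordPow_succ, ← wordPow_add]
    congr 1
    omega
  exact ⟨t, ht, k - q - 1, by
    rw [hk, List.drop_length_add_append, List.drop_append_of_le_length ht.le]⟩

theorem ultimatelyPeriodic_of_frequently_prefix_wordPow {z : ℕ → A} {w : List A}
    (h : ∃ᶠ L in atTop, ∃ k, wordPrefix z L <+: wordPow w k) : UltimatelyPeriodic z := by
  have hw : w ≠ [] := by
    rintro rfl
    obtain ⟨L, hL, k, hk⟩ := frequently_atTop.1 h 1
    have := hk.length_le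
    simp [length_wordPrefix, length_wordPow] at this
    omega
  refine ⟨0, w.length, List.length_pos_iff.2 hw, fun n _ => ?_⟩
  obtain ⟨L, hL, k, hk⟩ := frequently_atTop.1 h (n + w.length + 1)
  have hlen : L ≤ (wordPow w k).length := by simpa [length_wordPrefix] using hk.length_le
  have hz : ∀ i < L, (wordPow w k)[i]? = some (z i) := fun i hi => by
    simpa [wordPrefix] using List.prefix_iff_getElem?.1 hk i (by simpa [length_wordPrefix])
  have := getElem?_wordPow_add_length w (k := k) (i := n) (by omega)
  rwa [hz _ (by omega), hz _ (by omega), Option.some_inj] at this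

end Powers

section Patterns

theorem exists_wordPrefix_split {z : ℕ → A} {L : ℕ} {u v : List A} (h : wordPrefix z L <+: u ++ v) :
    ∃ c, wordPrefix z c <+: u ∧ wordPrefix (wordDrop c z) (L - c) <+: v := by
  rcases le_or_gt L u.length with hL | hL
  · refine ⟨L, List.prefix_of_prefix_length_le h (List.prefix_append u v) ?_, ?_⟩
    · simpa [length_wordPrefix] using hL
    · simp [wordPrefix]
  · have hu : u <+: wordPrefix z L :=
      List.prefix_of_prefix_length_le (List.prefix_append u v) h
        (by simp [length_wordPrefix]; omega)
    have hsplit := wordPrefix_add z u.length (L - u.length)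
    rw [Nat.add_sub_cancel' hL.le, ← eq_wordPrefix_of_prefix hu] at hsplit
    rw [hsplit] at h
    exact ⟨u.length, by rw [← eq_wordPrefix_of_prefix hu], (List.prefix_append_right_inj u).1 h⟩

theorem List.infix_append_cases {w u v : List A} (h : w <:+: u ++ v) :
    w <:+: v ∨ ∃ s < u.length, w <+: u.drop s ++ v := by
  obtain ⟨s, r, h⟩ := h
  rw [List.append_assoc, List.append_eq_append_iff] at h
  rcases h with ⟨a, rfl, h⟩ | ⟨c, rfl, rfl⟩
  · rcases eq_or_ne a [] with rfl | ha
    · exact Or.inl ⟨[], r, by simpa using h⟩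
    · refine Or.inr ⟨s.length, by simp [List.length_pos_iff.2 ha], ?_⟩
      rw [List.drop_left, ← h]
      exact List.prefix_append _ _
  · exact Or.inl ⟨c, r, by simp⟩

inductive PatternBlock (A : Type*) where
  | word (w : List A)
  | pow (w : List A)

namespace PatternBlock

def base : PatternBlock A → List A
  | word w => w
  | pow w => w

def lang : PatternBlock A → Language A
  | word w => {w}
  | pow w => {u | ∃ k, u = wordPow w k}

def tails (t : ℕ) : PatternBlock A → List (PatternBlock A)
  | word w => [word (w.drop t)]
  | pow w => [word (w.drop t), pow w]

end PatternBlock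

def patternLang (ps : List (PatternBlock A)) : Language A := (ps.map PatternBlock.lang).prod

theorem patternLang_nil : patternLang ([] : List (PatternBlock A)) = 1 := rfl

theorem patternLang_cons (b : PatternBlock A) (ps : List (PatternBlock A)) :
    patternLang (b :: ps) = b.lang * patternLang ps := rfl

theorem patternLang_append (ps qs : List (PatternBlock A)) :
    patternLang (ps ++ qs) = patternLang ps * patternLang qs := by
  simp [patternLang]

theorem PatternBlock.exists_drop_mem (b : PatternBlock A) {u : List A} (hu : u ∈ b.lang) {s : ℕ}
    (hs : s < u.length) : ∃ t < b.base.length, u.drop s ∈ patternLang (b.tails t) := by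
  cases b with
  | word w =>
    obtain rfl : u = w := hu
    exact ⟨s, hs, by rw [PatternBlock.tails, patternLang_cons, patternLang_nil, mul_one]; rfl⟩
  | pow w =>
    obtain ⟨k, rfl⟩ := hu
    obtain ⟨t, ht, k', hk'⟩ := drop_wordPow hs
    refine ⟨t, ht, ?_⟩
    rw [hk', PatternBlock.tails, patternLang_cons, patternLang_cons, patternLang_nil, mul_one]
    exact Language.append_mem_mul rfl ⟨k', rfl⟩

theorem PatternBlock.ultimatelyPeriodic_of_frequently_prefix (b : PatternBlock A) {z : ℕ → A}
    (h : ∃ᶠ L in atTop, ∃ u ∈ b.lang, wordPrefix z L <+: u) : UltimatelyPeriodic z := by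
  cases b with
  | word w =>
    obtain ⟨L, hL, u, rfl, hu⟩ := frequently_atTop.1 h (w.length + 1)
    have := hu.length_le
    simp [length_wordPrefix] at this
    omega
  | pow w =>
    exact ultimatelyPeriodic_of_frequently_prefix_wordPow <|
      h.mono fun _ ⟨_, ⟨k, hk⟩, hu⟩ => ⟨k, hk ▸ hu⟩

theorem ultimatelyPeriodic_of_frequently_prefix_patternLang (ps : List (PatternBlock A)) {z : ℕ → A}
    (h : ∃ᶠ L in atTop, ∃ u ∈ patternLang ps, wordPrefix z L <+: u) : UltimatelyPeriodic z := by
  induction ps generalizing z with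
  | nil =>
    obtain ⟨L, hL, u, hu, hp⟩ := frequently_atTop.1 h 1
    rw [patternLang_nil, Language.mem_one] at hu
    have := hp.length_le
    simp [hu, length_wordPrefix] at this
    omega
  | cons b ps ih =>
    by_cases hb : ∃ᶠ c in atTop, ∃ u ∈ b.lang, wordPrefix z c <+: u
    · exact b.ultimatelyPeriodic_of_frequently_prefix hb
    -- otherwise the part of the prefix lying in the first block is shorter than some `M`
    obtain ⟨M, hM⟩ := eventually_atTop.1 (not_frequently.1 hb)
    have hshift : ∃ᶠ L in atTop, ∃ c : Fin M,
        ∃ v ∈ patternLang ps, wordPrefix (wordDrop c z) (L - c) <+: v := by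
      refine h.mono fun L ⟨u, hu, hp⟩ => ?_
      obtain ⟨u₁, hu₁, u₂, hu₂, rfl⟩ := Language.mem_mul.1 hu
      obtain ⟨c, hc₁, hc₂⟩ := exists_wordPrefix_split hp
      have hcM : c < M := not_le.1 fun hc => hM c hc ⟨u₁, hu₁, hc₁⟩
      exact ⟨⟨c, hcM⟩, u₂, hu₂, hc₂⟩
    obtain ⟨c, hc⟩ := frequently_exists.1 hshift
    exact (ih ((tendsto_sub_atTop_nat c).frequently hc)).of_wordDrop

theorem ultimatelyPeriodic_of_frequently_infix_patternLang (ps : List (PatternBlock A)) {z : ℕ → A}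
    (h : ∃ᶠ L in atTop, ∃ u ∈ patternLang ps, wordPrefix z L <:+: u) : UltimatelyPeriodic z := by
  induction ps with
  | nil =>
    obtain ⟨L, hL, u, hu, hp⟩ := frequently_atTop.1 h 1
    rw [patternLang_nil, Language.mem_one] at hu
    have := hp.length_le
    simp [hu, length_wordPrefix] at this
    omega
  | cons b ps ih =>
    have hcases : ∀ L, (∃ u ∈ patternLang (b :: ps), wordPrefix z L <:+: u) →
        (∃ u ∈ patternLang ps, wordPrefix z L <:+: u) ∨
        ∃ t : Fin b.base.length, ∃ u ∈ patternLang (b.tails t ++ ps), wordPrefix z L <+: u := by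
      rintro L ⟨u, hu, hp⟩
      obtain ⟨u₁, hu₁, u₂, hu₂, rfl⟩ := Language.mem_mul.1 hu
      rcases List.infix_append_cases hp with hp | ⟨s, hs, hp⟩
      · exact Or.inl ⟨u₂, hu₂, hp⟩
      · obtain ⟨t, ht, hmem⟩ := b.exists_drop_mem hu₁ hs
        refine Or.inr ⟨⟨t, ht⟩, _, ?_, hp⟩
        rw [patternLang_append]
        exact Language.append_mem_mul hmem hu₂
    rcases frequently_or_distrib.1 (h.mono hcases) with h | h
    · exact ih h
    · obtain ⟨t, ht⟩ := frequently_exists.1 h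
      exact ultimatelyPeriodic_of_frequently_prefix_patternLang _ ht

end Patterns

section Iterates

variable (f : A → List A)

theorem applyIter_zero (u : List A) : applyIter f 0 u = u := rfl

theorem applyIter_succ (n : ℕ) (u : List A) :
    applyIter f (n + 1) u = applyIter f n (u.flatMap f) :=
  Function.iterate_succ_apply _ _ _

theorem applyIter_succ' (n : ℕ) (u : List A) :
    applyIter f (n + 1) u = (applyIter f n u).flatMap f :=
  Function.iterate_succ_apply' _ _ _

theorem applyIter_add (m n : ℕ) (u : List A) :
    applyIter f (m + n) u = applyIter f m (applyIter f n u) :=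
  Function.iterate_add_apply _ _ _ _

theorem applyIter_append (n : ℕ) (u v : List A) :
    applyIter f n (u ++ v) = applyIter f n u ++ applyIter f n v := by
  induction n generalizing u v with
  | zero => rfl
  | succ n ih => simp only [applyIter_succ, List.flatMap_append, ih]

theorem applyIter_nil (n : ℕ) : applyIter f n [] = [] := by
  induction n with
  | zero => rfl
  | succ n ih => rw [applyIter_succ, List.flatMap_nil, ih]

theorem applyIter_eq_flatMap (n : ℕ) (u : List A) :
    applyIter f n u = u.flatMap fun b => applyIter f n [b] := by
  induction u with
  | nil => exact applyIter_nil f n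
  | cons b u ih => rw [List.flatMap_cons, ← ih, ← applyIter_append, List.singleton_append]

theorem applyIter_reverse (n : ℕ) (u : List A) :
    applyIter (fun b => (f b).reverse) n u.reverse = (applyIter f n u).reverse := by
  induction n generalizing u with
  | zero => rfl
  | succ n ih => rw [applyIter_succ, applyIter_succ, ← ih, List.reverse_flatMap]; rfl

end Iterates

theorem List.exists_eq_append_cons_of_exists_not {p : A → Prop} :
    ∀ {l : List A}, (∃ x ∈ l, ¬ p x) → ∃ L e R, l = L ++ e :: R ∧ (∀ x ∈ L, p x) ∧ ¬ p e
  | [], ⟨_, hx, _⟩ => absurd hx List.not_mem_nil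
  | b :: l, ⟨x, hx, hpx⟩ => by
    by_cases hb : p b
    · obtain ⟨L, e, R, rfl, hL, he⟩ := exists_eq_append_cons_of_exists_not
        ⟨x, (List.mem_cons.1 hx).resolve_left (by rintro rfl; exact hpx hb), hpx⟩
      exact ⟨b :: L, e, R, rfl, by simpa [hb] using hL, he⟩
    · exact ⟨[], b, l, rfl, by simp, hb⟩

section BoundedLetters

def IsBoundedLetter (f : A → List A) (b : A) : Prop :=
  ∃ k, ∀ n, (applyIter f n [b]).length ≤ k

def IsBoundedWord (f : A → List A) (w : List A) : Prop :=
  ∀ b ∈ w, IsBoundedLetter f b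

variable {f : A → List A}

theorem IsBoundedLetter.of_mem_applyIter {b c : A} {n : ℕ} (hb : IsBoundedLetter f b)
    (hc : c ∈ applyIter f n [b]) : IsBoundedLetter f c := by
  obtain ⟨k, hk⟩ := hb
  obtain ⟨s, t, hst⟩ := List.append_of_mem hc
  refine ⟨k, fun j => le_trans ?_ (hk (j + n))⟩
  rw [applyIter_add, hst, show s ++ c :: t = s ++ [c] ++ t by simp, applyIter_append,
    applyIter_append]
  simp only [List.length_append]
  omega

theorem IsBoundedWord.length_applyIter_le {K : ℕ}
    (hK : ∀ b, IsBoundedLetter f b → ∀ n, (applyIter f n [b]).length ≤ K) {u : List A}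
    (hu : IsBoundedWord f u) (n : ℕ) : (applyIter f n u).length ≤ K * u.length := by
  rw [applyIter_eq_flatMap, List.length_flatMap, Nat.mul_comm]
  simpa using List.sum_le_card_nsmul (u.map fun b => (applyIter f n [b]).length) K
    (by simpa using fun b hb => hK b (hu b hb) n)

variable [Finite A]

variable (f) in
theorem exists_length_applyIter_le : ∃ K, ∀ b, IsBoundedLetter f b →
    ∀ n, (applyIter f n [b]).length ≤ K := by
  have hex : ∀ b, ∃ k, IsBoundedLetter f b → ∀ n, (applyIter f n [b]).length ≤ k := fun b => by
    by_cases hb : IsBoundedLetter f b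
    · exact hb.imp fun _ hk _ => hk
    · exact ⟨0, fun h => absurd h hb⟩
  choose k hk using hex
  obtain ⟨K, hK⟩ := Finite.exists_le k
  exact ⟨K, fun b hb n => (hk b hb n).trans (hK b)⟩

theorem IsBoundedLetter.of_isBoundedWord_applyIter {c : A} {m : ℕ}
    (h : IsBoundedWord f (applyIter f m [c])) : IsBoundedLetter f c := by
  obtain ⟨K, hK⟩ := exists_length_applyIter_le f
  refine ⟨∑ j ∈ Finset.range m, (applyIter f j [c]).length + K * (applyIter f m [c]).length,
    fun n => ?_⟩
  rcases lt_or_ge n m with hn | hn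
  · have := Finset.single_le_sum (fun j _ => Nat.zero_le _) (Finset.mem_range.2 hn)
      (f := fun j => (applyIter f j [c]).length)
    omega
  · have := h.length_applyIter_le hK (n - m)
    rw [← applyIter_add, Nat.sub_add_cancel hn] at this
    omega

theorem isBoundedWord_of_applyIter {u : List A} {m : ℕ} (h : IsBoundedWord f (applyIter f m u)) :
    IsBoundedWord f u := fun b hb =>
  IsBoundedLetter.of_isBoundedWord_applyIter fun c hc =>
    h c (by rw [applyIter_eq_flatMap]; exact List.mem_flatMap.2 ⟨b, hb, hc⟩)

theorem exists_eq_append_cons_of_not_isBoundedLetter {d : A} (hd : ¬ IsBoundedLetter f d) :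
    ∃ L e R, f d = L ++ e :: R ∧ IsBoundedWord f L ∧ ¬ IsBoundedLetter f e := by
  refine List.exists_eq_append_cons_of_exists_not ?_
  by_contra! h
  exact hd (IsBoundedLetter.of_isBoundedWord_applyIter (m := 1)
    (by simpa [applyIter_succ, applyIter_zero, IsBoundedWord] using h))

end BoundedLetters

theorem exists_periodic_of_finite {X : Type*} [Finite X] (F : ℕ → X)
    (hF : ∀ m n, F m = F n → F (m + 1) = F (n + 1)) :
    ∃ n₀ p, 0 < p ∧ Function.Periodic (fun n => F (n + n₀)) p := by
  obtain ⟨i, j, hne, heq⟩ := Finite.exists_ne_map_eq_of_infinite F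
  wlog hij : i < j generalizing i j
  · exact this j i hne.symm heq.symm (by omega)
  refine ⟨i, j - i, by omega, fun n => ?_⟩
  induction n with
  | zero => simp [show j - i + i = j by omega, heq]
  | succ n ih =>
    simpa [show n + 1 + (j - i) + i = n + (j - i) + i + 1 by omega,
      show n + 1 + i = n + i + 1 by omega] using hF _ _ ih

theorem exists_periodic_iterates [Finite A] (f : A → List A) (μ : A → A) :
    ∃ n₀ p, 0 < p ∧ Function.Periodic (fun n => μ^[n + n₀]) p ∧
      ∀ u, IsBoundedWord f u → Function.Periodic (fun n => applyIter f (n + n₀) u) p := by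
  obtain ⟨K, hK⟩ := exists_length_applyIter_le f
  have : Finite {l : List A // l.length ≤ K} := (List.finite_length_le A K).to_subtype
  let F : ℕ → (A → A) × ({b // IsBoundedLetter f b} → {l : List A // l.length ≤ K}) :=
    fun n => (μ^[n], fun b => ⟨applyIter f n [b.1], hK b.1 b.2 n⟩)
  have hF : ∀ m n, F m = F n → F (m + 1) = F (n + 1) := by
    intro m n h
    simp only [F, Prod.mk.injEq, funext_iff, Subtype.ext_iff] at h ⊢
    refine ⟨fun d => by rw [Function.iterate_succ_apply', Function.iterate_succ_apply', h.1],
      fun b => ?_⟩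
    simp only [applyIter_succ, List.flatMap_singleton]
    rw [applyIter_eq_flatMap, applyIter_eq_flatMap]
    refine List.flatMap_congr fun c hc => h.2 ⟨c, b.2.of_mem_applyIter (n := 1) ?_⟩
    simpa [applyIter_succ, applyIter_zero] using hc
  obtain ⟨n₀, p, hp, hper⟩ := exists_periodic_of_finite F hF
  refine ⟨n₀, p, hp, fun n => congrArg Prod.fst (hper n), fun u hu n => ?_⟩
  show applyIter f (n + p + n₀) u = applyIter f (n + n₀) u
  rw [applyIter_eq_flatMap, applyIter_eq_flatMap]
  exact List.flatMap_congr fun b hb =>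
    congrArg Subtype.val (congrFun (congrArg Prod.snd (hper n)) ⟨b, hu b hb⟩)

section PowerForm

def HasPowerForm (C : ℕ) (u : List A) : Prop :=
  ∃ H V T k, u = H ++ wordPow V k ++ T ∧ H.length ≤ C ∧ V.length ≤ C ∧ T.length ≤ C

theorem hasPowerForm_nil (C : ℕ) : HasPowerForm C ([] : List A) :=
  ⟨[], [], [], 0, rfl, by simp, by simp, by simp⟩

theorem HasPowerForm.reverse {C : ℕ} {u : List A} (h : HasPowerForm C u) :
    HasPowerForm C u.reverse := by
  obtain ⟨H, V, T, k, rfl, hH, hV, hT⟩ := h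
  exact ⟨T.reverse, V.reverse, H.reverse, k, by simp [reverse_wordPow], by simpa, by simpa,
    by simpa⟩

theorem HasPowerForm.mono {C D : ℕ} {u : List A} (h : HasPowerForm C u) (hCD : C ≤ D) :
    HasPowerForm D u := by
  obtain ⟨H, V, T, k, rfl, hH, hV, hT⟩ := h
  exact ⟨H, V, T, k, rfl, hH.trans hCD, hV.trans hCD, hT.trans hCD⟩

section HeadSpine

variable (f L : A → List A) (μ : A → A)

/-- `headSpine f L μ n m d = f^(m+n-1)(L d) f^(m+n-2)(L (μ d)) ⋯ f^m(L (μ^(n-1) d))`.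
When `f d = L d ++ μ d :: ⋯` splits `f d` at its first unbounded letter, `headSpine f L μ m 0 d`
is the part of `f^m(d)` before its first unbounded letter `μ^m(d)`. -/
def headSpine : ℕ → ℕ → A → List A
  | 0, _, _ => []
  | n + 1, m, d => applyIter f (m + n) (L d) ++ headSpine n m (μ d)

theorem headSpine_add (n n' m : ℕ) (d : A) :
    headSpine f L μ (n + n') m d =
      headSpine f L μ n (m + n') d ++ headSpine f L μ n' m (μ^[n] d) := by
  induction n generalizing d with
  | zero => simp [headSpine]
  | succ n ih =>
    rw [show n + 1 + n' = n + n' + 1 by omega, headSpine, headSpine, ih,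
      Function.iterate_succ_apply, ← List.append_assoc, show m + (n + n') = m + n' + n by omega]

theorem headSpine_periodic {n₀ p : ℕ}
    (hper : ∀ d, Function.Periodic (fun j => applyIter f (j + n₀) (L d)) p) (n : ℕ) (d : A) :
    Function.Periodic (fun m => headSpine f L μ n (m + n₀) d) p := by
  induction n generalizing d with
  | zero => exact fun _ => rfl
  | succ n ih =>
    intro m
    simp only [headSpine]
    rw [show headSpine f L μ n (m + p + n₀) (μ d) = headSpine f L μ n (m + n₀) (μ d) from
      ih (μ d) m, show m + p + n₀ + n = m + n + p + n₀ by omega,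
      show m + n₀ + n = m + n + n₀ by omega]
    exact congrArg (· ++ _) (hper d (m + n))

theorem length_headSpine_le {B : ℕ} (hB : ∀ d j, (applyIter f j (L d)).length ≤ B)
    (n m : ℕ) (d : A) : (headSpine f L μ n m d).length ≤ n * B := by
  induction n generalizing d with
  | zero => simp [headSpine]
  | succ n ih =>
    simp only [headSpine, List.length_append, Nat.succ_mul]
    have := hB d (m + n)
    have := ih (μ d)
    omega

theorem applyIter_eq_headSpine_append {R : A → List A}
    (hsplit : ∀ d, ¬ IsBoundedLetter f d → f d = L d ++ μ d :: R d ∧ ¬ IsBoundedLetter f (μ d))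
    (m : ℕ) {d : A} (hd : ¬ IsBoundedLetter f d) :
    ¬ IsBoundedLetter f (μ^[m] d) ∧
      ∃ R', applyIter f m [d] = headSpine f L μ m 0 d ++ μ^[m] d :: R' := by
  induction m generalizing d with
  | zero => exact ⟨hd, [], by simp [headSpine, applyIter_zero]⟩
  | succ m ih =>
    obtain ⟨hfd, hμd⟩ := hsplit d hd
    obtain ⟨hμm, R', hR'⟩ := ih hμd
    refine ⟨by rwa [Function.iterate_succ_apply], R' ++ applyIter f m (R d), ?_⟩
    rw [applyIter_succ, List.flatMap_singleton, hfd, ← List.singleton_append, applyIter_append,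
      applyIter_append, hR', headSpine, Function.iterate_succ_apply, Nat.zero_add]
    simp

theorem headSpine_mul_eq_wordPow {n₀ p r : ℕ}
    (hper : ∀ d, Function.Periodic (fun j => applyIter f (j + n₀) (L d)) p) (hr : n₀ ≤ r)
    {d : A} (hd : Function.IsPeriodicPt μ p d) (k : ℕ) :
    headSpine f L μ (k * p) r d = wordPow (headSpine f L μ p r d) k := by
  induction k with
  | zero => simp [headSpine, wordPow_zero]
  | succ k ih =>
    have hshift : headSpine f L μ p (r + k * p) d = headSpine f L μ p r d := by
      simpa [show r - n₀ + k * p + n₀ = r + k * p by omega, Nat.sub_add_cancel hr]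
        using (headSpine_periodic f L μ hper p d).nat_mul k (r - n₀)
    rw [show (k + 1) * p = p + k * p by ring, headSpine_add, hshift, hd.eq, ih, wordPow_succ]

theorem headSpine_hasPowerForm {n₀ p B : ℕ} (hp : 0 < p)
    (hμ : Function.Periodic (fun n => μ^[n + n₀]) p)
    (hper : ∀ d, Function.Periodic (fun j => applyIter f (j + n₀) (L d)) p)
    (hB : ∀ d j, (applyIter f j (L d)).length ≤ B) (m : ℕ) (d : A) :
    HasPowerForm ((2 * n₀ + p) * B) (headSpine f L μ m 0 d) := by
  have hlen := length_headSpine_le f L μ hB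
  rcases lt_or_ge m (2 * n₀) with hm | hm
  · refine ⟨headSpine f L μ m 0 d, [], [], 0, by simp [wordPow_zero], ?_, by simp, by simp⟩
    exact (hlen m 0 d).trans (Nat.mul_le_mul_right _ (by omega))
  -- write `m = n₀ + (k * p + r)` with `n₀ ≤ r < n₀ + p`
  set k := (m - 2 * n₀) / p
  set r := n₀ + (m - 2 * n₀) % p
  have hr : r < n₀ + p := by have := Nat.mod_lt (m - 2 * n₀) hp; omega
  have hm' : m = n₀ + (k * p + r) := by have := Nat.div_add_mod (m - 2 * n₀) p; grind
  have hd : Function.IsPeriodicPt μ p (μ^[n₀] d) := by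
    simpa [Function.IsPeriodicPt, Function.IsFixedPt, ← Function.iterate_add_apply]
      using congrFun (hμ 0) d
  refine ⟨headSpine f L μ n₀ (k * p + r) d, headSpine f L μ p r (μ^[n₀] d),
    headSpine f L μ r 0 (μ^[n₀] d), k, ?_, ?_, ?_, ?_⟩
  · rw [hm', headSpine_add, headSpine_add, (hd.const_mul k).eq, Nat.zero_add, Nat.zero_add,
      headSpine_mul_eq_wordPow f L μ hper (by omega) hd, List.append_assoc]
  · exact (hlen _ _ _).trans (Nat.mul_le_mul_right _ (by omega))
  · exact (hlen _ _ _).trans (Nat.mul_le_mul_right _ (by omega))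
  · exact (hlen _ _ _).trans (Nat.mul_le_mul_right _ (by omega))

end HeadSpine

def PowerFormBoundedPrefixes (f : A → List A) (C : ℕ) : Prop :=
  ∀ m d β, ¬ IsBoundedLetter f d → IsBoundedWord f β → β <+: applyIter f m [d] →
    ∃ u, HasPowerForm C u ∧ β <+: u

def PowerFormBoundedSuffixes (f : A → List A) (C : ℕ) : Prop :=
  ∀ m d α, ¬ IsBoundedLetter f d → IsBoundedWord f α → α <:+ applyIter f m [d] →
    ∃ u, HasPowerForm C u ∧ α <:+ u

theorem PowerFormBoundedPrefixes.mono {f : A → List A} {C D : ℕ}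
    (h : PowerFormBoundedPrefixes f C) (hCD : C ≤ D) : PowerFormBoundedPrefixes f D :=
  fun m d β hd hβ hpre => (h m d β hd hβ hpre).imp fun _ ⟨hu, hβu⟩ => ⟨hu.mono hCD, hβu⟩

theorem PowerFormBoundedSuffixes.mono {f : A → List A} {C D : ℕ}
    (h : PowerFormBoundedSuffixes f C) (hCD : C ≤ D) : PowerFormBoundedSuffixes f D :=
  fun m d α hd hα hsuf => (h m d α hd hα hsuf).imp fun _ ⟨hu, hαu⟩ => ⟨hu.mono hCD, hαu⟩

theorem List.prefix_of_prefix_append_cons {β u R : List A} {e : A} (h : β <+: u ++ e :: R)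
    (he : e ∉ β) : β <+: u := by
  rcases List.prefix_or_prefix_of_prefix h (List.prefix_append u (e :: R)) with h' | ⟨t, rfl⟩
  · exact h'
  · rcases t with _ | ⟨c, t⟩
    · simp
    · obtain rfl : c = e := (List.cons_prefix_cons.1 ((List.prefix_append_right_inj u).1 h)).1
      simp at he

theorem exists_powerFormBoundedPrefixes [Finite A] (f : A → List A) :
    ∃ C, PowerFormBoundedPrefixes f C := by
  have hex : ∀ d, ∃ L e R, IsBoundedWord f L ∧ L <+: f d ∧
      (¬ IsBoundedLetter f d → f d = L ++ e :: R ∧ ¬ IsBoundedLetter f e) := fun d => by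
    by_cases hd : IsBoundedLetter f d
    · exact ⟨[], d, [], by simp [IsBoundedWord], List.nil_prefix, fun h => absurd hd h⟩
    · obtain ⟨L, e, R, h, hL, he⟩ := exists_eq_append_cons_of_not_isBoundedLetter hd
      exact ⟨L, e, R, hL, ⟨e :: R, h.symm⟩, fun _ => ⟨h, he⟩⟩
  choose L μ R hL hLf hsplit using hex
  obtain ⟨K, hK⟩ := exists_length_applyIter_le f
  obtain ⟨M, hM⟩ := Finite.exists_le fun b => (f b).length
  obtain ⟨n₀, p, hp, hμ, hper⟩ := exists_periodic_iterates f μ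
  have hB : ∀ d j, (applyIter f j (L d)).length ≤ K * M := fun d j =>
    ((hL d).length_applyIter_le hK j).trans
      (Nat.mul_le_mul_left _ ((hLf d).length_le.trans (hM d)))
  refine ⟨(2 * n₀ + p) * (K * M), fun m d β hd hβ hpre => ?_⟩
  obtain ⟨he, R', hR'⟩ := applyIter_eq_headSpine_append f L μ hsplit m hd
  exact ⟨_, headSpine_hasPowerForm f L μ hp hμ (fun d => hper _ (hL d)) hB m d,
    List.prefix_of_prefix_append_cons (hR' ▸ hpre) fun h => he (hβ _ h)⟩

theorem isBoundedLetter_reverse_iff {f : A → List A} {b : A} :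
    IsBoundedLetter (fun c => (f c).reverse) b ↔ IsBoundedLetter f b := by
  have hlen : ∀ n, (applyIter (fun c => (f c).reverse) n [b]).length =
      (applyIter f n [b]).length := fun n => by
    simpa using congrArg List.length (applyIter_reverse f n [b])
  simp only [IsBoundedLetter, hlen]

theorem exists_powerFormBoundedSuffixes [Finite A] (f : A → List A) :
    ∃ C, PowerFormBoundedSuffixes f C := by
  obtain ⟨C, hC⟩ := exists_powerFormBoundedPrefixes fun c => (f c).reverse
  refine ⟨C, fun m d α hd hα hsuf => ?_⟩
  obtain ⟨u, hu, hpre⟩ := hC m d α.reverse (by rwa [isBoundedLetter_reverse_iff])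
    (fun b hb => isBoundedLetter_reverse_iff.2 (hα b (List.mem_reverse.1 hb)))
    (by rw [← List.reverse_singleton, applyIter_reverse]; exact List.reverse_prefix.2 hsuf)
  exact ⟨u.reverse, hu.reverse, List.reverse_prefix.1 (by simpa using hpre)⟩

end PowerForm

section Factors

theorem List.exists_drop_flatMap_eq (g : A → List A) :
    ∀ (u : List A) (s : ℕ), ∃ α v, (u.flatMap g).drop s = α ++ v.flatMap g ∧ v <:+ u ∧
      (α = [] ∨ ∃ e, α <:+ g e)
  | [], s => ⟨[], [], by simp, List.suffix_refl _, Or.inl rfl⟩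
  | c :: t, s => by
    rw [List.flatMap_cons]
    rcases lt_or_ge s (g c).length with hs | hs
    · exact ⟨(g c).drop s, t, List.drop_append_of_le_length hs.le, List.suffix_cons c t,
        Or.inr ⟨c, List.drop_suffix _ _⟩⟩
    · obtain ⟨α, v, h, hv, hα⟩ := exists_drop_flatMap_eq g t (s - (g c).length)
      refine ⟨α, v, ?_, hv.trans (List.suffix_cons c t), hα⟩
      rw [← h, List.drop_append, List.drop_eq_nil_of_le hs, List.nil_append]

theorem List.exists_eq_flatMap_append_of_prefix (g : A → List A) :
    ∀ (u : List A) {w : List A}, w <+: u.flatMap g →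
      ∃ v β, w = v.flatMap g ++ β ∧ v <+: u ∧ (β = [] ∨ ∃ e, β <+: g e)
  | [], w, hw => ⟨[], [], by simpa using hw, List.prefix_refl _, Or.inl rfl⟩
  | c :: t, w, hw => by
    rw [List.flatMap_cons] at hw
    rcases List.prefix_or_prefix_of_prefix hw (List.prefix_append (g c) _) with h | ⟨w', rfl⟩
    · exact ⟨[], w, by simp, List.nil_prefix, Or.inr ⟨c, h⟩⟩
    · obtain ⟨v, β, rfl, hv, hβ⟩ :=
        exists_eq_flatMap_append_of_prefix g t ((List.prefix_append_right_inj _).1 hw)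
      exact ⟨c :: v, β, by simp, List.cons_prefix_cons.2 ⟨rfl, hv⟩, hβ⟩

theorem List.infix_flatMap_cases (g : A → List A) {u w : List A} (h : w <:+: u.flatMap g) :
    (∃ e, w <:+: g e) ∨ ∃ α v β, w = α ++ (v.flatMap g ++ β) ∧ v <:+: u ∧
      (α = [] ∨ ∃ e, α <:+ g e) ∧ (β = [] ∨ ∃ e, β <+: g e) := by
  obtain ⟨s, hs⟩ : ∃ s, w <+: (u.flatMap g).drop s := by
    obtain ⟨t, r, h⟩ := h
    exact ⟨t.length, r, by rw [← h, List.append_assoc, List.drop_left]⟩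
  obtain ⟨α, u', hdrop, hu', hα⟩ := List.exists_drop_flatMap_eq g u s
  rw [hdrop] at hs
  rcases List.prefix_or_prefix_of_prefix hs (List.prefix_append α _) with h | ⟨w', rfl⟩
  · rcases hα with rfl | ⟨e, he⟩
    · exact Or.inr ⟨[], [], [], List.prefix_nil.1 h, List.nil_infix, Or.inl rfl, Or.inl rfl⟩
    · exact Or.inl ⟨e, List.infix_iff_prefix_suffix.2 ⟨α, h, he⟩⟩
  obtain ⟨v, β, rfl, hv, hβ⟩ :=
    List.exists_eq_flatMap_append_of_prefix g u' ((List.prefix_append_right_inj α).1 hs)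
  exact Or.inr ⟨α, v, β, rfl, hv.isInfix.trans hu'.isInfix, hα, hβ⟩

theorem List.infix_append_append {α β X Y : List A} (hα : α <:+ X) (hβ : β <+: Y) (Z : List A) :
    α ++ Z ++ β <:+: X ++ Z ++ Y := by
  obtain ⟨p, rfl⟩ := hα
  obtain ⟨q, rfl⟩ := hβ
  exact ⟨p, q, by simp⟩

variable {f : A → List A} {C M : ℕ}

theorem isBoundedWord_append {u v : List A} :
    IsBoundedWord f (u ++ v) ↔ IsBoundedWord f u ∧ IsBoundedWord f v := by
  simp only [IsBoundedWord, List.mem_append, or_imp, forall_and]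

def IsPowerFormInfix (f : A → List A) (C M : ℕ) (w : List A) : Prop :=
  ∃ m u₁ v u₂, HasPowerForm C u₁ ∧ HasPowerForm C u₂ ∧ IsBoundedWord f v ∧ v.length ≤ M ∧
    w <:+: u₁ ++ applyIter f m v ++ u₂

theorem isPowerFormInfix_nil : IsPowerFormInfix f C M [] :=
  ⟨0, [], [], [], hasPowerForm_nil C, hasPowerForm_nil C, by simp [IsBoundedWord], by simp,
    List.nil_infix⟩

theorem IsPowerFormInfix.of_isBoundedLetter {c : A} (hc : IsBoundedLetter f c) (hM : 1 ≤ M)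
    {m : ℕ} {w : List A} (h : w <:+: applyIter f m [c]) : IsPowerFormInfix f C M w :=
  ⟨m, [], [c], [], hasPowerForm_nil C, hasPowerForm_nil C, by simpa [IsBoundedWord], by simpa,
    by simpa⟩

theorem PowerFormBoundedSuffixes.exists_suffix_append (htail : PowerFormBoundedSuffixes f C)
    {m : ℕ} {α : List A} (hα : IsBoundedWord f α) (h : α = [] ∨ ∃ e, α <:+ applyIter f m [e]) :
    ∃ u v, HasPowerForm C u ∧ IsBoundedWord f v ∧ v.length ≤ 1 ∧ α <:+ u ++ applyIter f m v := by
  rcases h with rfl | ⟨e, he⟩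
  · exact ⟨[], [], hasPowerForm_nil C, by simp [IsBoundedWord], by simp, List.nil_suffix⟩
  by_cases hbe : IsBoundedLetter f e
  · exact ⟨[], [e], hasPowerForm_nil C, by simpa [IsBoundedWord], by simp, by simpa⟩
  · obtain ⟨u, hu, hαu⟩ := htail m e α hbe hα he
    exact ⟨u, [], hu, by simp [IsBoundedWord], by simp, by simpa [applyIter_nil]⟩

theorem PowerFormBoundedPrefixes.exists_prefix_append (hhead : PowerFormBoundedPrefixes f C)
    {m : ℕ} {β : List A} (hβ : IsBoundedWord f β) (h : β = [] ∨ ∃ e, β <+: applyIter f m [e]) :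
    ∃ v u, HasPowerForm C u ∧ IsBoundedWord f v ∧ v.length ≤ 1 ∧ β <+: applyIter f m v ++ u := by
  rcases h with rfl | ⟨e, he⟩
  · exact ⟨[], [], hasPowerForm_nil C, by simp [IsBoundedWord], by simp, List.nil_prefix⟩
  by_cases hbe : IsBoundedLetter f e
  · exact ⟨[e], [], hasPowerForm_nil C, by simpa [IsBoundedWord], by simp, by simpa⟩
  · obtain ⟨u, hu, hβu⟩ := hhead m e β hbe hβ he
    exact ⟨[], u, hu, by simp [IsBoundedWord], by simp, by simpa [applyIter_nil]⟩

theorem isPowerFormInfix_of_infix_applyIter [Finite A] (hM : ∀ b, (f b).length ≤ M)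
    (hhead : PowerFormBoundedPrefixes f C) (htail : PowerFormBoundedSuffixes f C) :
    ∀ m c w, IsBoundedWord f w → w <:+: applyIter f m [c] → IsPowerFormInfix f C (M + 2) w := by
  intro m
  induction m with
  | zero =>
    intro c w hw hinf
    by_cases hc : IsBoundedLetter f c
    · exact .of_isBoundedLetter hc (by omega) hinf
    · obtain rfl : w = [] := List.eq_nil_iff_forall_not_mem.2 fun b hb =>
        hc (by obtain rfl : b = c := by simpa [applyIter_zero] using hinf.subset hb
               exact hw b hb)
      exact isPowerFormInfix_nil
  | succ m ih =>
    intro c w hw hinf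
    by_cases hc : IsBoundedLetter f c
    · exact .of_isBoundedLetter hc (by omega) hinf
    rw [applyIter_succ, List.flatMap_singleton, applyIter_eq_flatMap] at hinf
    rcases List.infix_flatMap_cases _ hinf with ⟨e, he⟩ | ⟨α, v, β, rfl, hv, hα, hβ⟩
    · exact ih e w hw he
    rw [← applyIter_eq_flatMap] at hw ⊢
    obtain ⟨hαb, hvb, hβb⟩ : IsBoundedWord f α ∧ IsBoundedWord f (applyIter f m v) ∧
        IsBoundedWord f β := by simpa only [isBoundedWord_append] using hw
    obtain ⟨u₁, vL, hu₁, hvL, hvL1, hαu₁⟩ := htail.exists_suffix_append hαb hα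
    obtain ⟨vR, u₂, hu₂, hvR, hvR1, hβu₂⟩ := hhead.exists_prefix_append hβb hβ
    refine ⟨m, u₁, vL ++ v ++ vR, u₂, hu₁, hu₂, ?_, ?_, ?_⟩
    · simp only [isBoundedWord_append]
      exact ⟨⟨hvL, isBoundedWord_of_applyIter hvb⟩, hvR⟩
    · have := hv.length_le.trans (hM c)
      simp only [List.length_append]
      omega
    · simpa [applyIter_append, List.append_assoc] using
        List.infix_append_append hαu₁ hβu₂ (applyIter f m v)

end Factors

theorem IsPowerFormInfix.exists_mem_patternLang {f : A → List A} {C M K : ℕ}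
    (hK : ∀ b, IsBoundedLetter f b → ∀ n, (applyIter f n [b]).length ≤ K) {w : List A}
    (h : IsPowerFormInfix f C M w) :
    ∃ H V W V' T : {l : List A // l.length ≤ 2 * C + K * M}, ∃ u ∈ patternLang
      [.word H.1, .pow V.1, .word W.1, .pow V'.1, .word T.1], w <:+: u := by
  obtain ⟨m, _, v, _, ⟨H, V, T, k, rfl, hH, hV, hT⟩, ⟨H', V', T', l, rfl, hH', hV', hT'⟩,
    hv, hvM, hw⟩ := h
  have hW : (T ++ applyIter f m v ++ H').length ≤ 2 * C + K * M := by
    have := (hv.length_applyIter_le hK m).trans (Nat.mul_le_mul_left K hvM)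
    simp only [List.length_append]
    omega
  refine ⟨⟨H, by omega⟩, ⟨V, by omega⟩, ⟨_, hW⟩, ⟨V', by omega⟩, ⟨T', by omega⟩,
    H ++ (wordPow V k ++ ((T ++ applyIter f m v ++ H') ++ (wordPow V' l ++ T'))), ?_,
    by simpa [List.append_assoc] using hw⟩
  simp only [patternLang_cons, patternLang_nil, mul_one]
  exact Language.append_mem_mul rfl <| Language.append_mem_mul ⟨k, rfl⟩ <|
    Language.append_mem_mul rfl <| Language.append_mem_mul ⟨l, rfl⟩ rfl

theorem isBoundedWord_wordPrefix {f : A → List A} {z : ℕ → A} (hz : ∀ i, IsBoundedLetter f (z i))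
    (L : ℕ) : IsBoundedWord f (wordPrefix z L) := fun b hb => by
  obtain ⟨i, rfl⟩ := List.mem_ofFn.1 hb
  exact hz i

theorem ultimatelyPeriodic_of_forall_wordPrefix_infix_applyIter [Finite A] {f : A → List A}
    {z : ℕ → A} (hz : ∀ i, IsBoundedLetter f (z i))
    (hinf : ∀ L, ∃ m c, wordPrefix z L <:+: applyIter f m [c]) : UltimatelyPeriodic z := by
  obtain ⟨C₁, hhead⟩ := exists_powerFormBoundedPrefixes f
  obtain ⟨C₂, htail⟩ := exists_powerFormBoundedSuffixes f
  obtain ⟨K, hK⟩ := exists_length_applyIter_le f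
  obtain ⟨M, hM⟩ := Finite.exists_le fun b => (f b).length
  have hcover := isPowerFormInfix_of_infix_applyIter hM
    (hhead.mono (Nat.le_add_right C₁ C₂)) (htail.mono (Nat.le_add_left C₂ C₁))
  have : Finite {l : List A // l.length ≤ 2 * (C₁ + C₂) + K * (M + 2)} :=
    (List.finite_length_le A _).to_subtype
  have h := Frequently.of_forall (f := atTop) fun L => by
    obtain ⟨m, c, hL⟩ := hinf L
    exact (hcover m c _ (isBoundedWord_wordPrefix hz L) hL).exists_mem_patternLang hK
  simp only [frequently_exists] at h
  obtain ⟨H, V, W, V', T, h⟩ := h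
  exact ultimatelyPeriodic_of_frequently_infix_patternLang _ h

section PureMorphic

variable {f : A → List A} {a : A} {x : ℕ → A}

theorem IsPureMorphic.applyIter_eq_wordPrefix (hx : IsPureMorphic f a x) (n : ℕ) :
    applyIter f n [a] = wordPrefix x (applyIter f n [a]).length := by
  induction n with
  | zero => simp [applyIter_zero, wordPrefix, hx.1]
  | succ n ih =>
    have := hx.2.2 (applyIter f n [a]).length
    rw [← ih] at this
    rw [applyIter_succ']
    exact this.symm

theorem IsPureMorphic.lt_length_applyIter (hx : IsPureMorphic f a x) (n : ℕ) :
    n < (applyIter f n [a]).length := by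
  obtain ⟨-, ⟨s, hfa, -, hs⟩, -⟩ := hx
  induction n with
  | zero => simp [applyIter_zero]
  | succ n ih =>
    rw [applyIter_succ, List.flatMap_singleton, hfa, ← List.singleton_append, applyIter_append,
      List.length_append]
    have := List.length_pos_iff.2 (hs n)
    omega

theorem IsPureMorphic.exists_infix_applyIter (hx : IsPureMorphic f a x) {z : ℕ → A}
    (hz : InOrbitClosure z x) (L : ℕ) : ∃ m, wordPrefix z L <:+: applyIter f m [a] := by
  obtain ⟨i, hi⟩ := hz (wordPrefix z L)
    ⟨0, List.ext_getElem (by simp) fun n _ _ => by simp [wordPrefix]⟩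
  have hzx : wordPrefix z L = wordPrefix (wordDrop i x) L :=
    List.ext_getElem (by simp [length_wordPrefix]) fun n h₁ _ => by
      rw [List.getElem_of_eq hi h₁]
      simp [wordPrefix, wordDrop, Nat.add_comm]
  have hpre : wordPrefix x (i + L) <+: applyIter f (i + L) [a] := by
    have hlen := hx.lt_length_applyIter (i + L)
    conv_rhs => rw [hx.applyIter_eq_wordPrefix (i + L), ← Nat.add_sub_cancel' hlen.le,
      wordPrefix_add]
    exact List.prefix_append _ _
  refine ⟨i + L, List.IsInfix.trans ?_ hpre.isInfix⟩
  rw [hzx, wordPrefix_add]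
  exact (List.suffix_append _ _).isInfix

end PureMorphic

end

theorem stmt3 {A : Type*} [Fintype A] (f : A → List A) (a : A) (x : ℕ → A)
    (hx : IsPureMorphic f a x) (z : ℕ → A) (hz : InOrbitClosure z x)
    (hbdd : ∀ i : ℕ, ∃ k : ℕ, ∀ n : ℕ, (applyIter f n [z i]).length ≤ k) :
    UltimatelyPeriodic z :=
  ultimatelyPeriodic_of_forall_wordPrefix_infix_applyIter hbdd fun L =>
    (hx.exists_infix_applyIter hz L).imp fun _ h => ⟨a, h⟩
end

section
/- Let d = f^ω(0) be the period-doubling word, where f : 0 ↦ 01, 1 ↦ 00, and let ρ be the order 0 < 1. Then the lexicographically least word in the shift orbit closure of d beginning with 0 is z = g^ω(0), the fixed point of g : 0 ↦ 0001, 1 ↦ 0101. -/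
/-!
Writing `d` in blocks of four, `d[4a, 4a + 4) = 010 d(a)`, while `z[4a, 4a + 4) = 0 z(a) 01`.
Read from position `4i + 2`, the word `d` therefore repeats the block structure of `z`, and
an occurrence of `z[0, m)` at `i` yields one of `z[0, 4m)` at `4i + 2`: every prefix of `z`,
hence every factor, occurs in `d`.

For minimality, suppose `z[0, n)` occurs in `d` at `i` and `z n = 1`; we show `d (i + n) = 1`
by induction on `n`. Since `z` begins with `000` and `000` occurs in `d` only at positions
`≡ 2 (mod 4)`, we have `i = 4l + 2`. If `n ≡ 3 (mod 4)`, then `i + n ≡ 1 (mod 4)` and `d` has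
a `1` there. Otherwise `n = 4m + 1` with `z m = 1`, and reading `d` at positions
`≡ 3 (mod 4)` desubstitutes the occurrence to one of `z[0, m)` at `l`.
-/

lemma isFactor_iff {A : Type*} {w : List A} {x : ℕ → A} :
    IsFactor w x ↔ ∃ i, ∀ j (hj : j < w.length), w[j] = x (i + j) := by
  refine exists_congr fun i => ⟨fun h j hj => ?_, fun h => ?_⟩
  · simpa [hj] using congrArg (·[j]?) h
  · exact List.ext_getElem (by simp) fun j hj _ => by simp [h j hj]

lemma inOrbitClosure_iff {A : Type*} {y x : ℕ → A} :
    InOrbitClosure y x ↔ ∀ n, ∃ i, ∀ j < n, x (i + j) = y j := by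
  constructor
  · intro h n
    obtain ⟨i, hi⟩ := isFactor_iff.1 <|
      h (wordPrefix y n) (isFactor_iff.2 ⟨0, fun j hj => by simp [wordPrefix]⟩)
    exact ⟨i, fun j hj => by simpa [wordPrefix] using (hi j (by simpa [wordPrefix])).symm⟩
  · intro h w hw
    obtain ⟨k, hk⟩ := isFactor_iff.1 hw
    obtain ⟨i, hi⟩ := h (k + w.length)
    exact isFactor_iff.2 ⟨i + k, fun j hj => by rw [hk, ← hi _ (by omega), Nat.add_assoc]⟩

lemma IsPrefixOfWord.getElem_eq {A : Type*} {w : List A} {x : ℕ → A} (h : IsPrefixOfWord w x)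
    {j : ℕ} (hj : j < w.length) : x j = w[j] := by
  simpa [wordPrefix, hj] using congrArg (·[j]?) h

lemma length_applyMorphism_of_uniform {A B : Type*} {f : A → List B} {L : ℕ}
    (hf : ∀ a, (f a).length = L) (w : List A) : (applyMorphism f w).length = L * w.length := by
  simp [applyMorphism, List.length_flatMap, hf, mul_comm]

lemma IsWordImage.apply_mul_add {A B : Type*} {f : A → List B} {x : ℕ → A} {y : ℕ → B}
    {L : ℕ} (h : IsWordImage f x y) (hf : ∀ a, (f a).length = L) (k : ℕ) {j : ℕ} (hj : j < L) :
    y (L * k + j) = (f (x k))[j]'(hf (x k) ▸ hj) := by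
  have hlen : (applyMorphism f (wordPrefix x k)).length = L * k := by
    simp [length_applyMorphism_of_uniform hf, wordPrefix]
  have hsplit : applyMorphism f (wordPrefix x (k + 1))
      = applyMorphism f (wordPrefix x k) ++ f (x k) := by
    simp only [applyMorphism, wordPrefix, List.ofFn_succ_last, List.flatMap_append,
      List.flatMap_singleton, Fin.val_castSucc, Fin.val_last]
  have hpre := h (k + 1)
  rw [hsplit] at hpre
  rw [hpre.getElem_eq (by simp [hlen, hf, hj]), List.getElem_append_right (by omega)]
  simp only [hlen, Nat.add_sub_cancel_left]

lemma lexLe_of_forall_le {A : Type*} [PartialOrder A] {x y : ℕ → A}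
    (h : ∀ n, (∀ i < n, x i = y i) → x n ≤ y n) : LexLe (· < ·) x y := by
  by_cases hxy : x = y
  · exact Or.inr hxy
  classical
  have hne : ∃ n, x n ≠ y n := Function.ne_iff.1 hxy
  have hmin : ∀ i < Nat.find hne, x i = y i := fun i hi => not_not.1 (Nat.find_min hne hi)
  exact Or.inl ⟨Nat.find hne, hmin, lt_of_le_of_ne (h _ hmin) (Nat.find_spec hne)⟩

section PeriodDoubling

variable {d z : ℕ → Bool}

lemma pd_two_mul (hd : IsWordImage pdMorph d d) (k : ℕ) :
    d (2 * k) = false ∧ d (2 * k + 1) = !d k := by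
  have hf : ∀ b, (pdMorph b).length = 2 := fun b => by cases b <;> rfl
  have h0 := hd.apply_mul_add hf k (j := 0) (by norm_num)
  have h1 := hd.apply_mul_add hf k (j := 1) (by norm_num)
  cases hk : d k <;> simp_all [pdMorph]

lemma pd_four_mul (hd : IsWordImage pdMorph d d) (a : ℕ) :
    d (4 * a) = false ∧ d (4 * a + 1) = true ∧ d (4 * a + 2) = false ∧ d (4 * a + 3) = d a := by
  obtain ⟨e0, e1⟩ := pd_two_mul hd (2 * a)
  obtain ⟨e2, e3⟩ := pd_two_mul hd (2 * a + 1)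
  obtain ⟨e4, e5⟩ := pd_two_mul hd a
  refine ⟨?_, ?_, ?_, ?_⟩
  · rwa [show 4 * a = 2 * (2 * a) by ring]
  · rw [show 4 * a + 1 = 2 * (2 * a) + 1 by ring, e1, e4]; rfl
  · rwa [show 4 * a + 2 = 2 * (2 * a + 1) by ring]
  · rw [show 4 * a + 3 = 2 * (2 * a + 1) + 1 by ring, e3, e5, Bool.not_not]

lemma g_four_mul (hz : IsWordImage gMorph z z) (a : ℕ) :
    z (4 * a) = false ∧ z (4 * a + 1) = z a ∧ z (4 * a + 2) = false ∧ z (4 * a + 3) = true := by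
  have hf : ∀ b, (gMorph b).length = 4 := fun b => by cases b <;> rfl
  have h0 := hz.apply_mul_add hf a (j := 0) (by norm_num)
  have h1 := hz.apply_mul_add hf a (j := 1) (by norm_num)
  have h2 := hz.apply_mul_add hf a (j := 2) (by norm_num)
  have h3 := hz.apply_mul_add hf a (j := 3) (by norm_num)
  cases ha : z a <;> simp_all [gMorph]

lemma exists_eq_four_mul_add (n : ℕ) : ∃ m r, r < 4 ∧ n = 4 * m + r :=
  ⟨n / 4, n % 4, Nat.mod_lt _ (by norm_num), (Nat.div_add_mod n 4).symm⟩

lemma pd_occurs_g_prefix (hd : IsWordImage pdMorph d d) (hz : IsWordImage gMorph z z) :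
    ∀ n, ∃ i, ∀ j < 4 ^ n, d (i + j) = z j
  | 0 => ⟨0, fun j hj => by
      obtain rfl : j = 0 := by omega
      simpa using (pd_two_mul hd 0).1.trans (g_four_mul hz 0).1.symm⟩
  | n + 1 => by
    obtain ⟨i, hi⟩ := pd_occurs_g_prefix hd hz n
    refine ⟨4 * i + 2, fun j hj => ?_⟩
    obtain ⟨a, r, hr, rfl⟩ := exists_eq_four_mul_add j
    have ha : a < 4 ^ n := by rw [pow_succ] at hj; omega
    obtain ⟨-, -, d2, d3⟩ := pd_four_mul hd (i + a)
    obtain ⟨d0, d1, -, -⟩ := pd_four_mul hd (i + a + 1)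
    obtain ⟨z0, z1, z2, z3⟩ := g_four_mul hz a
    interval_cases r
    · rw [show 4 * i + 2 + (4 * a + 0) = 4 * (i + a) + 2 by ring, d2, ← z0, add_zero]
    · rw [show 4 * i + 2 + (4 * a + 1) = 4 * (i + a) + 3 by ring, d3, z1, hi a ha]
    · rw [show 4 * i + 2 + (4 * a + 2) = 4 * (i + a + 1) by ring, d0, z2]
    · rw [show 4 * i + 2 + (4 * a + 3) = 4 * (i + a + 1) + 1 by ring, d1, z3]

lemma pd_three_false_at_two_mod_four (hd : IsWordImage pdMorph d d) {i : ℕ} (h0 : d i = false)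
    (h1 : d (i + 1) = false) (h2 : d (i + 2) = false) : ∃ l, i = 4 * l + 2 := by
  obtain ⟨m, r, hr, rfl⟩ := exists_eq_four_mul_add i
  obtain ⟨-, e1, -, -⟩ := pd_four_mul hd m
  obtain ⟨-, f1, -, -⟩ := pd_four_mul hd (m + 1)
  interval_cases r
  · simp_all
  · simp_all
  · exact ⟨m, rfl⟩
  · rw [show 4 * m + 3 + 2 = 4 * (m + 1) + 1 by ring, f1] at h2
    cases h2

lemma pd_eq_true_of_g_prefix (hd : IsWordImage pdMorph d d) (hz : IsWordImage gMorph z z)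
    {n : ℕ} (hn : z n = true) {i : ℕ} (hi : ∀ j < n, d (i + j) = z j) : d (i + n) = true := by
  induction n using Nat.strong_induction_on generalizing i with
  | _ n ih =>
  obtain ⟨m, r, hr, rfl⟩ := exists_eq_four_mul_add n
  obtain ⟨z0, z1, z2, -⟩ := g_four_mul hz 0
  obtain ⟨zm0, zm1, zm2, -⟩ := g_four_mul hz m
  have hr13 : r = 1 ∧ 0 < m ∨ r = 3 := by
    interval_cases r
    · simp_all
    · rcases Nat.eq_zero_or_pos m with rfl | hm
      · simp_all
      · exact Or.inl ⟨rfl, hm⟩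
    · simp_all
    · exact Or.inr rfl
  obtain ⟨l, rfl⟩ : ∃ l, i = 4 * l + 2 := by
    refine pd_three_false_at_two_mod_four hd ?_ ?_ ?_
    · simpa [z0] using hi 0 (by omega)
    · simpa [z1, z0] using hi 1 (by omega)
    · simpa [z2] using hi 2 (by omega)
  rcases hr13 with ⟨rfl, -⟩ | rfl
  · rw [show 4 * l + 2 + (4 * m + 1) = 4 * (l + m) + 3 by ring, (pd_four_mul hd _).2.2.2]
    refine ih m (by omega) (zm1 ▸ hn) fun j hj => ?_
    have := hi (4 * j + 1) (by omega)
    rwa [show 4 * l + 2 + (4 * j + 1) = 4 * (l + j) + 3 by ring, (pd_four_mul hd _).2.2.2,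
      (g_four_mul hz j).2.1] at this
  · rw [show 4 * l + 2 + (4 * m + 3) = 4 * (l + m + 1) + 1 by ring, (pd_four_mul hd _).2.1]

lemma g_inOrbitClosure_pd (hd : IsWordImage pdMorph d d) (hz : IsWordImage gMorph z z) :
    InOrbitClosure z d :=
  inOrbitClosure_iff.2 fun n => (pd_occurs_g_prefix hd hz n).imp fun _ hi j hj =>
    hi j (hj.trans (Nat.lt_pow_self (by norm_num)))

lemma g_le_of_inOrbitClosure_pd (hd : IsWordImage pdMorph d d) (hz : IsWordImage gMorph z z)
    {y : ℕ → Bool} (hy : InOrbitClosure y d) (n : ℕ) (hzy : ∀ j < n, z j = y j) : z n ≤ y n := by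
  obtain ⟨i, hi⟩ := inOrbitClosure_iff.1 hy (n + 1)
  refine Bool.le_iff_imp.2 fun hzn => ?_
  rw [← hi n n.lt_succ_self]
  exact pd_eq_true_of_g_prefix hd hz hzn fun j hj => (hi j (by omega)).trans (hzy j hj).symm

end PeriodDoubling

theorem stmt10 (d z : ℕ → Bool)
    (hd : IsPureMorphic pdMorph false d) (hz : IsPureMorphic gMorph false z) :
    IsLeastWord (· < ·) d false z := by
  obtain ⟨-, -, hd⟩ := hd
  obtain ⟨hz0, -, hz⟩ := hz
  exact ⟨g_inOrbitClosure_pd hd hz, hz0, fun y hy _ =>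
    lexLe_of_forall_le (g_le_of_inOrbitClosure_pd hd hz hy)⟩
end
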